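/- arXiv:1712.03324 — 2 statements merged into one kernel-verified Lean document; each statement's English description precedes it below -/
import Mathlib

section
/- Let (X, 𝓔) be a coarse space with coarse countable asymptotic dimension, witnessed by a sequence (nᵢ) of positive integers. Then (X, 𝓔) has straight finite coarse decomposition complexity (sFCDC). -/
/-!
A `(K, n)`-decomposition `V = Z₁ ∪ ⋯ ∪ Zₙ` unfolds into successive `2`-decompositions
`V = Z₁ ∪ (Z₂ ∪ ⋯ ∪ Zₙ)`, `Z₂ ∪ ⋯ ∪ Zₙ = Z₂ ∪ (Z₃ ∪ ⋯ ∪ Zₙ)`, …, whose intermediate families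
consist of the tails; every step is `L`-disjoint as soon as `L ⊆ K`. So, given `L₀, L₁, …`,
cut the sequence into consecutive blocks, one for each level of the asymptotic dimension chain,
let `Kᵢ` be the union of the `i`-th block, and unfold the chain obtained for `(Kᵢ)`.
-/

/-- A coarse structure on a set `X`: a collection of subsets of `X × X` (entourages)
containing the diagonal and closed under subsets, finite unions, inverses and composition. -/
structure CoarseStructure (X : Type*) where
  sets : Set (Set (X × X))
  diagonal_mem : {p : X × X | p.1 = p.2} ∈ sets
  subset_mem : ∀ E ∈ sets, ∀ F : Set (X × X), F ⊆ E → F ∈ sets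
  union_mem : ∀ E ∈ sets, ∀ F ∈ sets, E ∪ F ∈ sets
  inv_mem : ∀ E ∈ sets, {p : X × X | (p.2, p.1) ∈ E} ∈ sets
  comp_mem : ∀ E ∈ sets, ∀ F ∈ sets,
    {p : X × X | ∃ y, (p.1, y) ∈ E ∧ (y, p.2) ∈ F} ∈ sets

/-- A family `𝒰` of subsets of `X` is `E`-disjoint if for all distinct `U, V ∈ 𝒰`,
`(U × V) ∩ E = ∅`. -/
def EDisjoint {X : Type*} (E : Set (X × X)) (𝒰 : Set (Set X)) : Prop :=
  ∀ U ∈ 𝒰, ∀ V ∈ 𝒰, U ≠ V → (U ×ˢ V) ∩ E = ∅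

/-- A family `𝒰` is uniformly bounded if `⋃_{U ∈ 𝒰} U × U` is an entourage. -/
def UniformlyBounded {X : Type*} (𝓔 : CoarseStructure X) (𝒰 : Set (Set X)) : Prop :=
  (⋃ U ∈ 𝒰, U ×ˢ U) ∈ 𝓔.sets

/-- The image of `E ⊆ (X × Y) × (X × Y)` under `p₁ × p₁`. -/
def projFst {X Y : Type*} (E : Set ((X × Y) × (X × Y))) : Set (X × X) :=
  (fun p : (X × Y) × (X × Y) => (p.1.1, p.2.1)) '' E

/-- The image of `E ⊆ (X × Y) × (X × Y)` under `p₂ × p₂`. -/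
def projSnd {X Y : Type*} (E : Set ((X × Y) × (X × Y))) : Set (Y × Y) :=
  (fun p : (X × Y) × (X × Y) => (p.1.2, p.2.2)) '' E

/-- The product coarse structure `𝓔 ∗ 𝓕` on `X × Y`. -/
def prodCoarse {X Y : Type*} (𝓔 : CoarseStructure X) (𝓕 : CoarseStructure Y) :
    CoarseStructure (X × Y) where
  sets := {E | projFst E ∈ 𝓔.sets ∧ projSnd E ∈ 𝓕.sets}
  diagonal_mem := by
    constructor
    · refine 𝓔.subset_mem _ 𝓔.diagonal_mem _ ?_
      rintro ⟨a, b⟩ ⟨⟨p, q⟩, hpq, h⟩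
      simp only [Set.mem_setOf_eq] at hpq
      cases h
      simp [hpq]
    · refine 𝓕.subset_mem _ 𝓕.diagonal_mem _ ?_
      rintro ⟨a, b⟩ ⟨⟨p, q⟩, hpq, h⟩
      simp only [Set.mem_setOf_eq] at hpq
      cases h
      simp [hpq]
  subset_mem := by
    rintro E ⟨hE1, hE2⟩ F hFE
    exact ⟨𝓔.subset_mem _ hE1 _ (Set.image_mono hFE),
      𝓕.subset_mem _ hE2 _ (Set.image_mono hFE)⟩
  union_mem := by
    rintro E ⟨hE1, hE2⟩ F ⟨hF1, hF2⟩
    constructor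
    · rw [projFst, Set.image_union]
      exact 𝓔.union_mem _ hE1 _ hF1
    · rw [projSnd, Set.image_union]
      exact 𝓕.union_mem _ hE2 _ hF2
  inv_mem := by
    rintro E ⟨hE1, hE2⟩
    constructor
    · refine 𝓔.subset_mem _ (𝓔.inv_mem _ hE1) _ ?_
      rintro ⟨a, b⟩ ⟨⟨p, q⟩, hpq, h⟩
      cases h
      exact ⟨(q, p), hpq, rfl⟩
    · refine 𝓕.subset_mem _ (𝓕.inv_mem _ hE2) _ ?_
      rintro ⟨a, b⟩ ⟨⟨p, q⟩, hpq, h⟩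
      cases h
      exact ⟨(q, p), hpq, rfl⟩
  comp_mem := by
    rintro E ⟨hE1, hE2⟩ F ⟨hF1, hF2⟩
    constructor
    · refine 𝓔.subset_mem _ (𝓔.comp_mem _ hE1 _ hF1) _ ?_
      rintro ⟨a, b⟩ ⟨⟨p, q⟩, ⟨y, hy1, hy2⟩, h⟩
      cases h
      exact ⟨y.1, ⟨(p, y), hy1, rfl⟩, ⟨(y, q), hy2, rfl⟩⟩
    · refine 𝓕.subset_mem _ (𝓕.comp_mem _ hE2 _ hF2) _ ?_
      rintro ⟨a, b⟩ ⟨⟨p, q⟩, ⟨y, hy1, hy2⟩, h⟩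
      cases h
      exact ⟨y.2, ⟨(p, y), hy1, rfl⟩, ⟨(y, q), hy2, rfl⟩⟩
/-- `Y` admits an `(E, n)`-decomposition over `𝒰` if `Y = Y¹ ∪ ⋯ ∪ Yⁿ` where each `Yⁱ`
is the union of an `E`-disjoint subfamily of `𝒰`. -/
def AdmitsDecomposition {X : Type*} (E : Set (X × X)) (n : ℕ) (Y : Set X)
    (𝒰 : Set (Set X)) : Prop :=
  ∃ Z : Fin n → Set X, Y = ⋃ i, Z i ∧
    ∀ i, ∃ 𝒟 ⊆ 𝒰, EDisjoint E 𝒟 ∧ Z i = ⋃₀ 𝒟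

/-- Coarse property C: for every increasing sequence of entourages `E₁ ⊆ E₂ ⊆ ⋯`
there are finitely many families `𝒰₁, …, 𝒰ₙ` that together cover `X`, with `𝒰ᵢ`
being `Eᵢ`-disjoint and uniformly bounded. -/
def CoarsePropertyC {X : Type*} (𝓔 : CoarseStructure X) : Prop :=
  ∀ E : ℕ → Set (X × X), (∀ i, E i ∈ 𝓔.sets) → (∀ i, E i ⊆ E (i + 1)) →
    ∃ n : ℕ, ∃ 𝒰 : ℕ → Set (Set X),
      (∀ x : X, ∃ i < n, ∃ U ∈ 𝒰 i, x ∈ U) ∧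
      (∀ i < n, EDisjoint (E i) (𝒰 i)) ∧
      (∀ i < n, UniformlyBounded 𝓔 (𝒰 i))

/-- The sequence `n` witnesses coarse countable asymptotic dimension for `(X, 𝓔)`:
for every sequence of entourages `Kᵢ` there is a finite chain of families starting at
`{X}`, where each member of the `i`-th family admits a `(Kᵢ, nᵢ)`-decomposition over the
next family, ending with a uniformly bounded family. -/
def CAsdimWitness {X : Type*} (𝓔 : CoarseStructure X) (n : ℕ → ℕ) : Prop :=
  ∀ K : ℕ → Set (X × X), (∀ i, K i ∈ 𝓔.sets) →
    ∃ r : ℕ, ∃ 𝒱 : ℕ → Set (Set X),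
      𝒱 0 = {Set.univ} ∧
      (∀ i < r, ∀ V ∈ 𝒱 i, AdmitsDecomposition (K i) (n i) V (𝒱 (i + 1))) ∧
      UniformlyBounded 𝓔 (𝒱 r)

/-- Coarse countable asymptotic dimension. -/
def CoarseCountableAsdim {X : Type*} (𝓔 : CoarseStructure X) : Prop :=
  ∃ n : ℕ → ℕ, (∀ i, 0 < n i) ∧ CAsdimWitness 𝓔 n

/-- Straight finite coarse decomposition complexity (sFCDC). -/
def SFCDC {X : Type*} (𝓔 : CoarseStructure X) : Prop :=
  ∀ L : ℕ → Set (X × X), (∀ i, L i ∈ 𝓔.sets) →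
    ∃ m : ℕ, ∃ 𝒱 : ℕ → Set (Set X),
      𝒱 0 = {Set.univ} ∧
      (∀ i < m, ∀ V ∈ 𝒱 i, AdmitsDecomposition (L i) 2 V (𝒱 (i + 1))) ∧
      UniformlyBounded 𝓔 (𝒱 m)

section

open Set

variable {X : Type*}

lemma CoarseStructure.empty_mem (𝓔 : CoarseStructure X) : ∅ ∈ 𝓔.sets :=
  𝓔.subset_mem _ 𝓔.diagonal_mem _ (empty_subset _)

lemma CoarseStructure.biUnion_finset_mem (𝓔 : CoarseStructure X) {ι : Type*} (s : Finset ι)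
    {f : ι → Set (X × X)} (hf : ∀ i ∈ s, f i ∈ 𝓔.sets) : (⋃ i ∈ s, f i) ∈ 𝓔.sets := by
  rw [← Finset.sup_set_eq_biUnion]
  exact Finset.sup_induction 𝓔.empty_mem (fun _ h₁ _ h₂ => 𝓔.union_mem _ h₁ _ h₂) hf

section Decomposition

variable {E F : Set (X × X)} {𝒰 𝒰' : Set (Set X)} {A Y : Set X} {k l : ℕ}

lemma EDisjoint.mono (h : E ⊆ F) (hF : EDisjoint F 𝒰) : EDisjoint E 𝒰 := fun U hU V hV hUV =>
  subset_empty_iff.1 <| hF U hU V hV hUV ▸ inter_subset_inter_right _ h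

def IsEDisjointUnion (E : Set (X × X)) (𝒰 : Set (Set X)) (A : Set X) : Prop :=
  ∃ 𝒟 ⊆ 𝒰, EDisjoint E 𝒟 ∧ A = ⋃₀ 𝒟

lemma IsEDisjointUnion.mono (hE : E ⊆ F) (h𝒰 : 𝒰 ⊆ 𝒰') (h : IsEDisjointUnion F 𝒰 A) :
    IsEDisjointUnion E 𝒰' A :=
  let ⟨𝒟, h𝒟, hdisj, hA⟩ := h
  ⟨𝒟, h𝒟.trans h𝒰, hdisj.mono hE, hA⟩

lemma isEDisjointUnion_empty : IsEDisjointUnion E 𝒰 ∅ :=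
  ⟨∅, empty_subset _, fun _ h => h.elim, sUnion_empty.symm⟩

lemma isEDisjointUnion_of_mem (hA : A ∈ 𝒰) : IsEDisjointUnion E 𝒰 A :=
  ⟨{A}, singleton_subset_iff.2 hA, fun _ hU _ hV hUV => (hUV (hU.trans hV.symm)).elim,
    sUnion_singleton A |>.symm⟩

lemma admitsDecomposition_zero_iff : AdmitsDecomposition E 0 Y 𝒰 ↔ Y = ∅ := by
  simp [AdmitsDecomposition]

lemma admitsDecomposition_succ_iff :
    AdmitsDecomposition E (k + 1) Y 𝒰 ↔
      ∃ A B, Y = A ∪ B ∧ IsEDisjointUnion E 𝒰 A ∧ AdmitsDecomposition E k B 𝒰 := by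
  simp only [AdmitsDecomposition, Fin.exists_fin_succ_pi, iUnion_cons, Fin.forall_fin_succ,
    Fin.cons_zero, Fin.cons_succ]
  constructor
  · rintro ⟨A, Z, hY, hA, hZ⟩
    exact ⟨A, _, hY, hA, Z, rfl, hZ⟩
  · rintro ⟨A, _, hY, hA, Z, rfl, hZ⟩
    exact ⟨A, Z, hY, hA, hZ⟩

lemma AdmitsDecomposition.mono (hE : E ⊆ F) (hkl : k ≤ l) (h : AdmitsDecomposition F k Y 𝒰) :
    AdmitsDecomposition E l Y 𝒰 := by
  induction l, hkl using Nat.le_induction with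
  | base =>
    obtain ⟨Z, hY, hZ⟩ := h
    exact ⟨Z, hY, fun i => IsEDisjointUnion.mono hE subset_rfl (hZ i)⟩
  | succ l _ ih =>
    exact admitsDecomposition_succ_iff.2 ⟨∅, Y, (empty_union Y).symm, isEDisjointUnion_empty, ih⟩

lemma admitsDecomposition_of_mem (hA : A ∈ 𝒰) (k : ℕ) : AdmitsDecomposition E (k + 1) A 𝒰 :=
  AdmitsDecomposition.mono subset_rfl (Nat.le_add_left 1 k) <|
    admitsDecomposition_succ_iff.2 ⟨A, ∅, (union_empty A).symm, isEDisjointUnion_of_mem hA,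
      admitsDecomposition_zero_iff.2 rfl⟩

end Decomposition

def StraightlyDecomposable (𝓔 : CoarseStructure X) (L : ℕ → Set (X × X)) (s : ℕ)
    (𝒜 : Set (Set X)) : Prop :=
  ∃ m : ℕ, ∃ 𝒲 : ℕ → Set (Set X), 𝒲 0 = 𝒜 ∧
    (∀ i < m, ∀ V ∈ 𝒲 i, AdmitsDecomposition (L (s + i)) 2 V (𝒲 (i + 1))) ∧
    UniformlyBounded 𝓔 (𝒲 m)

lemma sFCDC_iff (𝓔 : CoarseStructure X) :
    SFCDC 𝓔 ↔ ∀ L : ℕ → Set (X × X), (∀ i, L i ∈ 𝓔.sets) →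
      StraightlyDecomposable 𝓔 L 0 {univ} := by
  simp only [SFCDC, StraightlyDecomposable, zero_add]

namespace StraightlyDecomposable

variable {𝓔 : CoarseStructure X} {L : ℕ → Set (X × X)} {s : ℕ} {𝒜 ℬ : Set (Set X)}

lemma of_uniformlyBounded (h : UniformlyBounded 𝓔 𝒜) : StraightlyDecomposable 𝓔 L s 𝒜 :=
  ⟨0, fun _ => 𝒜, rfl, fun _ hi => (Nat.not_lt_zero _ hi).elim, h⟩

lemma cons (h𝒜 : ∀ V ∈ 𝒜, AdmitsDecomposition (L s) 2 V ℬ)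
    (hℬ : StraightlyDecomposable 𝓔 L (s + 1) ℬ) : StraightlyDecomposable 𝓔 L s 𝒜 := by
  obtain ⟨m, 𝒲, rfl, hstep, hbd⟩ := hℬ
  refine ⟨m + 1, fun i => Nat.casesOn i 𝒜 𝒲, rfl, ?_, hbd⟩
  rintro (_ | i) hi
  · exact h𝒜
  · simpa only [add_right_comm s 1 i, add_assoc] using hstep i (by omega)

lemma of_admitsDecomposition {K : Set (X × X)} {k : ℕ} (hL : ∀ t ≤ k, L (s + t) ⊆ K)
    (h𝒜 : ∀ V ∈ 𝒜, AdmitsDecomposition K (k + 1) V ℬ)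
    (hℬ : StraightlyDecomposable 𝓔 L (s + (k + 1)) ℬ) : StraightlyDecomposable 𝓔 L s 𝒜 := by
  induction k generalizing 𝒜 s with
  | zero => exact cons (fun V hV => (h𝒜 V hV).mono (hL 0 le_rfl) one_le_two) hℬ
  | succ k ih =>
    refine cons (ℬ := {T | AdmitsDecomposition K (k + 1) T ℬ}) (fun V hV => ?_)
      (ih (fun t ht => ?_) (fun T hT => hT) ?_)
    · obtain ⟨A, T, rfl, hA, hT⟩ := admitsDecomposition_succ_iff.1 (h𝒜 V hV)
      exact admitsDecomposition_succ_iff.2 ⟨A, T, rfl,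
        hA.mono (hL 0 (Nat.zero_le _)) (fun U hU => admitsDecomposition_of_mem hU k),
        admitsDecomposition_of_mem (𝒰 := {T | AdmitsDecomposition K (k + 1) T ℬ}) hT 0⟩
    · simpa only [add_assoc, add_comm 1 t] using hL (t + 1) (by omega)
    · simpa only [add_assoc, add_comm 1] using hℬ

end StraightlyDecomposable

end

theorem countableAsdim_implies_sFCDC_general {X : Type*} (𝓔 : CoarseStructure X)
    (n : ℕ → ℕ) (h : CAsdimWitness 𝓔 n) :
    SFCDC 𝓔 := by
  refine (sFCDC_iff 𝓔).2 fun L hL => ?_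
  -- level `i` of the chain is unfolded along the block of `n i + 1` entourages starting at `o i`
  set o : ℕ → ℕ := fun i => ∑ j ∈ Finset.range i, (n j + 1) with ho
  obtain ⟨r, 𝒱, h𝒱₀, hdec, hbd⟩ := h (fun i => ⋃ t ∈ Finset.range (n i + 1), L (o i + t))
    fun i => 𝓔.biUnion_finset_mem _ fun t _ => hL _
  have hlevel : ∀ i ≤ r, StraightlyDecomposable 𝓔 L (o i) (𝒱 i) := by
    intro i hi
    induction hi using Nat.decreasingInduction with
    | self => exact .of_uniformlyBounded hbd
    | of_succ i hi ih =>
      refine .of_admitsDecomposition (fun t ht => ?_)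
        (fun V hV => (hdec i hi V hV).mono subset_rfl (Nat.le_succ _)) ?_
      · exact Set.subset_biUnion_of_mem (u := fun t => L (o i + t))
          (Finset.mem_range_succ_iff.2 ht)
      · simpa only [ho, Finset.sum_range_succ] using ih
  simpa only [← h𝒱₀, ho, Finset.range_zero, Finset.sum_empty] using hlevel 0 (Nat.zero_le r)

/-- Coarse countable asymptotic dimension (with witnessing sequence `n` of positive
integers) implies straight finite coarse decomposition complexity. -/
theorem countableAsdim_implies_sFCDC {X : Type*} (𝓔 : CoarseStructure X)
    (n : ℕ → ℕ) (hn : ∀ i, 0 < n i) (h : CAsdimWitness 𝓔 n) :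
    SFCDC 𝓔 :=
  countableAsdim_implies_sFCDC_general 𝓔 n h
end

section
/- Let (X, 𝓔) and (Y, 𝓕) be coarse spaces, each with coarse countable asymptotic dimension. Then the product coarse space (X × Y, 𝓔 ∗ 𝓕) has coarse countable asymptotic dimension. -/
/-! Run the chain of decompositions of `X` first, on the sets `V ×ˢ univ` and against the
`X`-projections of the entourages, and then, starting from the bounded family it ends with, the
chain of `Y` on the sets `V ×ˢ W` against the `Y`-projections of the remaining entourages. The
`Y`-chain is thereby shifted in the index, which is absorbed by taking the partial suprema of
`max (nX i) (nY i)` as the sequence for the product. -/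

open Set

section Decomposition

variable {X Z : Type*} {E : Set (X × X)} {E' : Set (Z × Z)} {n m : ℕ} {V : Set X}
  {𝒱 𝒱' : Set (Set X)}

theorem AdmitsDecomposition.mono_s4 (h : AdmitsDecomposition E n V 𝒱) (hnm : n ≤ m)
    (h𝒱 : 𝒱 ⊆ 𝒱') : AdmitsDecomposition E m V 𝒱' := by
  obtain ⟨Z, rfl, hZ⟩ := h
  refine ⟨fun i => if hi : (i : ℕ) < n then Z ⟨i, hi⟩ else ∅, ?_, fun i => ?_⟩
  · ext x
    simp only [mem_iUnion]
    constructor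
    · rintro ⟨i, hx⟩
      exact ⟨Fin.castLE hnm i, by simpa [i.2] using hx⟩
    · rintro ⟨i, hx⟩
      split_ifs at hx with hi
      exacts [⟨_, hx⟩, absurd hx (notMem_empty x)]
  · dsimp only
    split_ifs with hi
    · obtain ⟨𝒟, h𝒟, hdisj, hZi⟩ := hZ ⟨i, hi⟩
      exact ⟨𝒟, h𝒟.trans h𝒱, hdisj, hZi⟩
    · exact ⟨∅, empty_subset _, fun U hU => absurd hU (notMem_empty U), sUnion_empty.symm⟩

theorem EDisjoint.preimage_inter (f : Z → X) (S : Set Z) (hE : Prod.map f f '' E' ⊆ E)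
    (h : EDisjoint E 𝒱) : EDisjoint E' ((fun U => f ⁻¹' U ∩ S) '' 𝒱) := by
  rintro _ ⟨U, hU, rfl⟩ _ ⟨U', hU', rfl⟩ hne
  have hUU' := h U hU U' hU' fun hEq => hne (hEq ▸ rfl)
  refine eq_empty_iff_forall_notMem.2 fun ⟨a, b⟩ ⟨⟨⟨ha, _⟩, hb, _⟩, hab⟩ => ?_
  exact eq_empty_iff_forall_notMem.1 hUU' (f a, f b) ⟨⟨ha, hb⟩, hE ⟨(a, b), hab, rfl⟩⟩

theorem AdmitsDecomposition.preimage_inter (f : Z → X) (S : Set Z)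
    (hE : Prod.map f f '' E' ⊆ E) (h : AdmitsDecomposition E n V 𝒱) :
    AdmitsDecomposition E' n (f ⁻¹' V ∩ S) ((fun U => f ⁻¹' U ∩ S) '' 𝒱) := by
  obtain ⟨Z, rfl, hZ⟩ := h
  refine ⟨fun i => f ⁻¹' Z i ∩ S, by rw [preimage_iUnion, iUnion_inter], fun i => ?_⟩
  obtain ⟨𝒟, h𝒟, hdisj, hZi⟩ := hZ i
  refine ⟨_, image_mono h𝒟, hdisj.preimage_inter f S hE, ?_⟩
  simp only [hZi, sUnion_image, preimage_sUnion, iUnion₂_inter]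

end Decomposition

section Product

variable {X Y : Type*} {E : Set ((X × Y) × (X × Y))} {n : ℕ}

theorem AdmitsDecomposition.prod_left {V : Set X} {𝒱 : Set (Set X)}
    (h : AdmitsDecomposition (projFst E) n V 𝒱) (W : Set Y) :
    AdmitsDecomposition E n (V ×ˢ W) ((· ×ˢ W) '' 𝒱) := by
  simpa only [prod_eq] using h.preimage_inter Prod.fst (Prod.snd ⁻¹' W) subset_rfl

theorem AdmitsDecomposition.prod_right {W : Set Y} {𝒲 : Set (Set Y)}
    (h : AdmitsDecomposition (projSnd E) n W 𝒲) (V : Set X) :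
    AdmitsDecomposition E n (V ×ˢ W) ((V ×ˢ ·) '' 𝒲) := by
  simpa only [prod_eq, inter_comm (Prod.fst ⁻¹' V)] using
    h.preimage_inter Prod.snd (Prod.fst ⁻¹' V) subset_rfl

theorem UniformlyBounded.image2_prod {𝓔 : CoarseStructure X} {𝓕 : CoarseStructure Y}
    {𝒱 : Set (Set X)} {𝒲 : Set (Set Y)} (h𝒱 : UniformlyBounded 𝓔 𝒱)
    (h𝒲 : UniformlyBounded 𝓕 𝒲) :
    UniformlyBounded (prodCoarse 𝓔 𝓕) (image2 (· ×ˢ ·) 𝒱 𝒲) := by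
  refine ⟨𝓔.subset_mem _ h𝒱 _ ?_, 𝓕.subset_mem _ h𝒲 _ ?_⟩
  · rintro _ ⟨⟨p, q⟩, hpq, rfl⟩
    simp only [mem_iUnion] at hpq
    obtain ⟨_, ⟨V, hV, W, -, rfl⟩, ⟨hp, -⟩, hq, -⟩ := hpq
    exact mem_biUnion hV ⟨hp, hq⟩
  · rintro _ ⟨⟨p, q⟩, hpq, rfl⟩
    simp only [mem_iUnion] at hpq
    obtain ⟨_, ⟨V, -, W, hW, rfl⟩, ⟨-, hp⟩, -, hq⟩ := hpq
    exact mem_biUnion hW ⟨hp, hq⟩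

theorem CAsdimWitness.prod {𝓔 : CoarseStructure X} {𝓕 : CoarseStructure Y} {n nX nY : ℕ → ℕ}
    (wX : CAsdimWitness 𝓔 nX) (wY : CAsdimWitness 𝓕 nY) (hnX : ∀ i, nX i ≤ n i)
    (hnY : ∀ i j, nY j ≤ n (i + j)) : CAsdimWitness (prodCoarse 𝓔 𝓕) n := by
  intro K hK
  obtain ⟨rX, 𝒱, h𝒱₀, h𝒱, h𝒱b⟩ := wX (fun i => projFst (K i)) fun i => (hK i).1
  obtain ⟨rY, 𝒲, h𝒲₀, h𝒲, h𝒲b⟩ := wY (fun j => projSnd (K (rX + j))) fun j => (hK _).2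
  refine ⟨rX + rY, fun i => image2 (· ×ˢ ·) (𝒱 (min i rX)) (𝒲 (i - rX)),
    by simp [h𝒱₀, h𝒲₀], ?_, by simpa using h𝒱b.image2_prod h𝒲b⟩
  rintro i hi _ ⟨V, hV, W, hW, rfl⟩
  rcases lt_or_ge i rX with hiX | hiX
  · rw [min_eq_left hiX.le] at hV
    rw [Nat.sub_eq_zero_of_le hiX.le, h𝒲₀] at hW
    refine ((h𝒱 i hiX V hV).prod_left W).mono_s4 (hnX i) ?_
    simp only [min_eq_left hiX.nat_succ_le, Nat.sub_eq_zero_of_le hiX.nat_succ_le, h𝒲₀]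
    exact image_subset_image2_left hW
  · obtain ⟨j, rfl⟩ := Nat.exists_eq_add_of_le hiX
    simp only [le_add_iff_nonneg_right, zero_le, min_eq_right, add_tsub_cancel_left] at hV hW
    refine ((h𝒲 j (by omega) W hW).prod_right V).mono_s4 (hnY rX j) ?_
    simp only [show min (rX + j + 1) rX = rX by omega, show rX + j + 1 - rX = j + 1 by omega]
    exact image_subset_image2_right hV

end Product

/-- Coarse countable asymptotic dimension is preserved by coarse direct products. -/
theorem countableAsdim_prod {X Y : Type*} (𝓔 : CoarseStructure X) (𝓕 : CoarseStructure Y)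
    (hX : CoarseCountableAsdim 𝓔) (hY : CoarseCountableAsdim 𝓕) :
    CoarseCountableAsdim (prodCoarse 𝓔 𝓕) := by
  obtain ⟨nX, hnX, wX⟩ := hX
  obtain ⟨nY, -, wY⟩ := hY
  have hle : nX ⊔ nY ≤ partialSups (nX ⊔ nY) := le_partialSups _
  refine ⟨partialSups (nX ⊔ nY), fun i => (hnX i).trans_le (le_sup_left.trans (hle i)), ?_⟩
  exact wX.prod wY (fun i => le_sup_left.trans (hle i))
    fun i j => le_sup_right.trans ((hle j).trans ((partialSups _).monotone le_add_self))
end
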